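/- The set of integer points (x,y,z) ∈ ℤ³ satisfying 2x² + 2y² + 2z² + xy + 2xz + 2yz − 2x − 2y − 2z ≤ 0 is exactly {(0,0,0), (1,0,0), (0,1,0), (0,0,1)}, and the left-hand side vanishes at each of these four points. (These four points are the vertices of the tetrahedron T¹_{(0,0,0)}.) -/

import Mathlib

/-! Completing squares, `24 Q = 3 (x + 4y + 2z - 2)² + (3x + 6z - 2)² + 4 ((3x - 1)² - 5)`, so `Q ≤ 0`
forces `(3x - 1)² ≤ 5`, i.e. `x ∈ {0, 1}` for an integer `x`. As `Q` is symmetric in `x` and `y`, the same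
holds for `y`, and a second decomposition gives `(3z + 2)(z - 1) ≤ 0`, i.e. `z ∈ {0, 1}`. Of the eight
points of `{0, 1}³` left, `Q` vanishes at the four vertices and is positive at the other four. -/

section Quadric

variable {R : Type*} [CommRing R]

def quadricQ1 (x y z : R) : R :=
  2 * x ^ 2 + 2 * y ^ 2 + 2 * z ^ 2 + x * y + 2 * x * z + 2 * y * z - 2 * x - 2 * y - 2 * z

lemma quadricQ1_swap (x y z : R) : quadricQ1 x y z = quadricQ1 y x z := by
  unfold quadricQ1; ring

lemma twentyFour_mul_quadricQ1 (x y z : R) :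
    24 * quadricQ1 x y z =
      3 * (x + 4 * y + 2 * z - 2) ^ 2 + (3 * x + 6 * z - 2) ^ 2 + 4 * ((3 * x - 1) ^ 2 - 5) := by
  unfold quadricQ1; ring

lemma oneHundredTwenty_mul_quadricQ1 (x y z : R) :
    120 * quadricQ1 x y z =
      15 * (4 * x + y + 2 * z - 2) ^ 2 + (15 * y + 6 * z - 6) ^ 2 + 48 * ((3 * z + 2) * (z - 1)) := by
  unfold quadricQ1; ring

variable [LinearOrder R] [IsStrictOrderedRing R] {x y z : R}

lemma sq_three_mul_sub_one_le_five_of_quadricQ1_nonpos (h : quadricQ1 x y z ≤ 0) :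
    (3 * x - 1) ^ 2 ≤ 5 := by
  nlinarith [twentyFour_mul_quadricQ1 x y z, sq_nonneg (x + 4 * y + 2 * z - 2),
    sq_nonneg (3 * x + 6 * z - 2)]

lemma three_mul_add_two_mul_sub_one_nonpos_of_quadricQ1_nonpos (h : quadricQ1 x y z ≤ 0) :
    (3 * z + 2) * (z - 1) ≤ 0 := by
  nlinarith [oneHundredTwenty_mul_quadricQ1 x y z, sq_nonneg (4 * x + y + 2 * z - 2),
    sq_nonneg (15 * y + 6 * z - 6)]

end Quadric

lemma Int.mem_Icc_of_sq_three_mul_sub_one_le_five {x : ℤ} (h : (3 * x - 1) ^ 2 ≤ 5) :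
    x ∈ Set.Icc 0 1 := by
  constructor <;> nlinarith

lemma Int.mem_Icc_of_three_mul_add_two_mul_sub_one_nonpos {z : ℤ} (h : (3 * z + 2) * (z - 1) ≤ 0) :
    z ∈ Set.Icc 0 1 := by
  constructor <;> nlinarith

lemma mem_Icc_of_quadricQ1_nonpos {x y z : ℤ} (h : quadricQ1 x y z ≤ 0) :
    x ∈ Set.Icc 0 1 ∧ y ∈ Set.Icc 0 1 ∧ z ∈ Set.Icc 0 1 := by
  have h' : quadricQ1 y x z ≤ 0 := quadricQ1_swap x y z ▸ h
  exact ⟨Int.mem_Icc_of_sq_three_mul_sub_one_le_five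
      (sq_three_mul_sub_one_le_five_of_quadricQ1_nonpos h),
    Int.mem_Icc_of_sq_three_mul_sub_one_le_five
      (sq_three_mul_sub_one_le_five_of_quadricQ1_nonpos h'),
    Int.mem_Icc_of_three_mul_add_two_mul_sub_one_nonpos
      (three_mul_add_two_mul_sub_one_nonpos_of_quadricQ1_nonpos h)⟩

lemma quadricQ1_nonpos_iff {x y z : ℤ} :
    quadricQ1 x y z ≤ 0 ↔
      (x, y, z) ∈ ({(0,0,0), (1,0,0), (0,1,0), (0,0,1)} : Set (ℤ × ℤ × ℤ)) := by
  constructor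
  · intro h
    obtain ⟨⟨hx₀, hx₁⟩, ⟨hy₀, hy₁⟩, ⟨hz₀, hz₁⟩⟩ := mem_Icc_of_quadricQ1_nonpos h
    interval_cases x <;> interval_cases y <;> interval_cases z <;> simp_all [quadricQ1]
  · rintro (h | h | h | h) <;> simp_all [quadricQ1]

theorem lattice_points_of_ellipsoid_Q1 :
    {v : ℤ × ℤ × ℤ | 2 * v.1 ^ 2 + 2 * v.2.1 ^ 2 + 2 * v.2.2 ^ 2 + v.1 * v.2.1 + 2 * v.1 * v.2.2 + 2 * v.2.1 * v.2.2 - 2 * v.1 - 2 * v.2.1 - 2 * v.2.2 ≤ 0} =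
      ({(0,0,0), (1,0,0), (0,1,0), (0,0,1)} : Set (ℤ × ℤ × ℤ)) ∧
    ∀ v ∈ ({(0,0,0), (1,0,0), (0,1,0), (0,0,1)} : Set (ℤ × ℤ × ℤ)),
      2 * v.1 ^ 2 + 2 * v.2.1 ^ 2 + 2 * v.2.2 ^ 2 + v.1 * v.2.1 + 2 * v.1 * v.2.2 + 2 * v.2.1 * v.2.2 - 2 * v.1 - 2 * v.2.1 - 2 * v.2.2 = 0 := by
  refine ⟨Set.ext fun v ↦ quadricQ1_nonpos_iff, ?_⟩
  rintro v (rfl | rfl | rfl | rfl) <;> norm_num
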